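/- arXiv:0808.2411 — 5 statements merged into one kernel-verified Lean document; each statement's English description precedes it below -/
import Mathlib

section
/- A nonzero rational function f ∈ ℂ(c) is expressible as a ratio of two polynomials with positive coefficients if and only if f has no pole at any positive real number and f(x) > 0 for every real x > 0. -/
/-- A polynomial over ℂ all of whose (nonzero) coefficients are positive real
numbers. -/
def PosCoeffPoly (p : Polynomial ℂ) : Prop :=
  p ≠ 0 ∧ ∀ k ∈ p.support, ∃ r : ℝ, 0 < r ∧ p.coeff k = (r : ℂ)

/-- A rational function is positive if it is a ratio of polynomials with
positive coefficients. -/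
def IsPositiveRatFunc (f : RatFunc ℂ) : Prop :=
  ∃ p q : Polynomial ℂ, PosCoeffPoly p ∧ PosCoeffPoly q ∧
    f = algebraMap (Polynomial ℂ) (RatFunc ℂ) p / algebraMap (Polynomial ℂ) (RatFunc ℂ) q

/-!
Polynomials with nonnegative coefficients are positive on `(0, ∞)`, which gives one direction.
For the other, `f = (num * conj denom) / |denom|²` is a quotient of real polynomials positive on
`(0, ∞)`, so it suffices that every such real `p` has a monic multiplier `m` with nonnegative
coefficients for which `p * m` has nonnegative coefficients. Such multipliers multiply, and `p`
factors into a positive constant, factors `X + a` with `a ≥ 0`, and quadratics `X² - bX + c` with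
`b² < 4c`. Multiplying such a quadratic by `X² + bX + c` gives a quadratic in `X²` whose roots
are the squares of the old ones; squaring doubles the arguments of the roots until they leave the
open right half-plane, where the coefficients become nonnegative.
-/

open Polynomial

section NonnegCoeffs

variable (R : Type*) [CommSemiring R] [PartialOrder R] [IsOrderedRing R]

def nonnegCoeffs : Subsemiring R[X] where
  carrier := {p | ∀ n, 0 ≤ p.coeff n}
  mul_mem' {p q} hp hq n := by
    rw [coeff_mul]
    exact Finset.sum_nonneg fun i _ => mul_nonneg (hp i.1) (hq i.2)
  one_mem' n := by
    rw [coeff_one]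
    split_ifs <;> simp
  add_mem' hp hq n := by
    rw [coeff_add]
    exact add_nonneg (hp n) (hq n)
  zero_mem' n := by simp

variable {R}

theorem C_mem_nonnegCoeffs {a : R} (ha : 0 ≤ a) : C a ∈ nonnegCoeffs R := by
  intro n
  rw [coeff_C]
  split_ifs <;> simp [ha]

theorem X_mem_nonnegCoeffs : X ∈ nonnegCoeffs R := by
  intro n
  rw [coeff_X]
  split_ifs <;> simp

theorem expand_mem_nonnegCoeffs {p : R[X]} (hp : p ∈ nonnegCoeffs R) {k : ℕ} (hk : 0 < k) :
    expand R k p ∈ nonnegCoeffs R := by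
  intro n
  rw [coeff_expand hk]
  split_ifs
  exacts [hp _, le_rfl]

def HasNonnegCoeffsMultiple (p : R[X]) : Prop :=
  ∃ m : R[X], m.Monic ∧ m ∈ nonnegCoeffs R ∧ p * m ∈ nonnegCoeffs R

theorem HasNonnegCoeffsMultiple.of_mem {p : R[X]} (hp : p ∈ nonnegCoeffs R) :
    HasNonnegCoeffsMultiple p :=
  ⟨1, monic_one, one_mem _, by rwa [mul_one]⟩

theorem HasNonnegCoeffsMultiple.mul {p q : R[X]} (hp : HasNonnegCoeffsMultiple p)
    (hq : HasNonnegCoeffsMultiple q) : HasNonnegCoeffsMultiple (p * q) := by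
  obtain ⟨m, hm, hm_mem, hpm⟩ := hp
  obtain ⟨n, hn, hn_mem, hqn⟩ := hq
  refine ⟨m * n, hm.mul hn, mul_mem hm_mem hn_mem, ?_⟩
  rw [mul_mul_mul_comm]
  exact mul_mem hpm hqn

theorem HasNonnegCoeffsMultiple.of_mul {p r : R[X]} (h : HasNonnegCoeffsMultiple (p * r))
    (hr : r.Monic) (hr_mem : r ∈ nonnegCoeffs R) : HasNonnegCoeffsMultiple p := by
  obtain ⟨m, hm, hm_mem, hprm⟩ := h
  exact ⟨r * m, hr.mul hm, mul_mem hr_mem hm_mem, by rwa [← mul_assoc]⟩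

theorem HasNonnegCoeffsMultiple.expand {p : R[X]} (h : HasNonnegCoeffsMultiple p) {k : ℕ}
    (hk : 0 < k) : HasNonnegCoeffsMultiple (Polynomial.expand R k p) := by
  obtain ⟨m, hm, hm_mem, hpm⟩ := h
  refine ⟨Polynomial.expand R k m, hm.expand hk, expand_mem_nonnegCoeffs hm_mem hk, ?_⟩
  rw [← map_mul]
  exact expand_mem_nonnegCoeffs hpm hk

end NonnegCoeffs

theorem eval_pos_of_mem_nonnegCoeffs {R : Type*} [CommSemiring R] [PartialOrder R]
    [IsStrictOrderedRing R] {p : R[X]} (hp : p ∈ nonnegCoeffs R)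
    (hp0 : p ≠ 0) {x : R} (hx : 0 < x) :
    0 < p.eval x := by
  rw [eval_eq_sum, Polynomial.sum_def]
  obtain ⟨k, hk⟩ := support_nonempty.mpr hp0
  refine Finset.sum_pos' (fun i _ => mul_nonneg (hp i) (pow_nonneg hx.le i)) ⟨k, hk, ?_⟩
  exact mul_pos ((hp k).lt_of_ne (mem_support_iff.mp hk).symm) (pow_pos hx k)

theorem quadratic_mul_quadratic_neg {R : Type*} [CommRing R] (b c : R) :
    (X ^ 2 - C b * X + C c) * (X ^ 2 + C b * X + C c) =
      expand R 2 (X ^ 2 - C (b ^ 2 - 2 * c) * X + C (c ^ 2)) := by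
  simp only [map_add, map_sub, map_mul, map_pow, expand_X, expand_C, map_ofNat]
  ring

theorem quadratic_mem_nonnegCoeffs {R : Type*} [CommRing R] [PartialOrder R] [IsOrderedRing R]
    {b c : R} (hb : b ≤ 0) (hc : 0 ≤ c) : X ^ 2 - C b * X + C c ∈ nonnegCoeffs R := by
  rw [sub_eq_add_neg, ← neg_mul, ← map_neg]
  exact add_mem (add_mem (pow_mem X_mem_nonnegCoeffs 2)
    (mul_mem (C_mem_nonnegCoeffs (neg_nonneg.mpr hb)) X_mem_nonnegCoeffs)) (C_mem_nonnegCoeffs hc)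

section Quadratic

variable {K : Type*} [Field K] [LinearOrder K] [IsStrictOrderedRing K]

/-- The ratio `(4c - b²) / c` is at most `4`, and while `b² > 2c` each squaring of the roots
multiplies it by `b² / c > 2`; so `N` bounds the number of squarings needed to reach `b ≤ 0`. -/
theorem hasNonnegCoeffsMultiple_quadratic_of_lt_two_pow (N : ℕ) :
    ∀ b c : K, b ^ 2 < 4 * c → 4 * c < 2 ^ N * (4 * c - b ^ 2) →
      HasNonnegCoeffsMultiple (X ^ 2 - C b * X + C c) := by
  induction N with
  | zero => intro b c _ hN; nlinarith [sq_nonneg b]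
  | succ N ih =>
    intro b c hdisc hN
    have hc : 0 < c := by nlinarith [sq_nonneg b]
    rcases le_or_gt b 0 with hb | hb
    · exact .of_mem (quadratic_mem_nonnegCoeffs hb hc.le)
    have hsq : HasNonnegCoeffsMultiple (X ^ 2 - C (b ^ 2 - 2 * c) * X + C (c ^ 2)) := by
      rcases le_or_gt (b ^ 2) (2 * c) with hb2 | hb2
      · exact .of_mem (quadratic_mem_nonnegCoeffs (by linarith) (sq_nonneg c))
      · refine ih _ _ (by nlinarith) ?_
        have hgap : 4 * c ^ 2 - (b ^ 2 - 2 * c) ^ 2 = b ^ 2 * (4 * c - b ^ 2) := by ring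
        have h2N : (0 : K) < 2 ^ N * (4 * c - b ^ 2) := by have := sub_pos.mpr hdisc; positivity
        rw [hgap]
        rw [pow_succ] at hN
        nlinarith [mul_lt_mul_of_pos_left hb2 h2N]
    refine HasNonnegCoeffsMultiple.of_mul (r := X ^ 2 + C b * X + C c) ?_ ?_ ?_
    · rw [quadratic_mul_quadratic_neg]
      exact hsq.expand two_pos
    · monicity!
    · simpa [sub_eq_add_neg] using quadratic_mem_nonnegCoeffs (neg_nonpos.mpr hb.le) hc.le

theorem hasNonnegCoeffsMultiple_quadratic [Archimedean K] {b c : K} (h : b ^ 2 < 4 * c) :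
    HasNonnegCoeffsMultiple (X ^ 2 - C b * X + C c) := by
  obtain ⟨N, hN⟩ := pow_unbounded_of_one_lt (4 * c / (4 * c - b ^ 2)) one_lt_two
  exact hasNonnegCoeffsMultiple_quadratic_of_lt_two_pow N b c h
    ((div_lt_iff₀ (sub_pos.mpr h)).mp hN)

end Quadratic

theorem exists_factor_hasNonnegCoeffsMultiple {p : ℝ[X]} (hp : ∀ x, 0 < x → 0 < p.eval x)
    (hdeg : 0 < p.natDegree) :
    ∃ d p₁ : ℝ[X], p = d * p₁ ∧ 0 < d.natDegree ∧ (∀ x, 0 < x → 0 < d.eval x) ∧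
      HasNonnegCoeffsMultiple d := by
  obtain ⟨z, hz⟩ :=
    IsAlgClosed.exists_aeval_eq_zero ℂ p (natDegree_pos_iff_degree_pos.mp hdeg).ne'
  by_cases him : z.im = 0
  · have hroot : p.IsRoot z.re := by
      have hzre : ((z.re : ℝ) : ℂ) = z := Complex.ext rfl (by simp [him])
      rw [← hzre, ← Complex.coe_algebraMap, aeval_algebraMap_apply_eq_algebraMap_eval] at hz
      exact (map_eq_zero_iff _ (algebraMap ℝ ℂ).injective).mp hz
    have hre : z.re ≤ 0 := not_lt.mp fun h => (hp _ h).ne' hroot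
    obtain ⟨p₁, rfl⟩ := dvd_iff_isRoot.mpr hroot
    refine ⟨X - C z.re, p₁, rfl, by rw [natDegree_X_sub_C]; exact one_pos,
      fun x hx => by rw [eval_sub, eval_X, eval_C]; linarith, .of_mem ?_⟩
    rw [sub_eq_add_neg, ← map_neg]
    exact add_mem X_mem_nonnegCoeffs (C_mem_nonnegCoeffs (neg_nonneg.mpr hre))
  · obtain ⟨p₁, rfl⟩ := p.quadratic_dvd_of_aeval_eq_zero_im_ne_zero hz him
    have hnorm : ‖z‖ ^ 2 = z.re ^ 2 + z.im ^ 2 := by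
      rw [← Complex.normSq_eq_norm_sq, Complex.normSq_apply]; ring
    have him2 : 0 < z.im ^ 2 := by positivity
    refine ⟨_, p₁, rfl, ?_, fun x _ => ?_, hasNonnegCoeffsMultiple_quadratic ?_⟩
    · have : (X ^ 2 - C (2 * z.re) * X + C (‖z‖ ^ 2)).natDegree = 2 := by compute_degree!
      omega
    · simp only [eval_add, eval_sub, eval_mul, eval_pow, eval_X, eval_C, hnorm]
      nlinarith [sq_nonneg (x - z.re)]
    · rw [hnorm]; nlinarith

theorem hasNonnegCoeffsMultiple_of_eval_pos {p : ℝ[X]} (hp : ∀ x, 0 < x → 0 < p.eval x) :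
    HasNonnegCoeffsMultiple p := by
  induction hn : p.natDegree using Nat.strong_induction_on generalizing p with
  | _ n ih =>
    rcases Nat.eq_zero_or_pos p.natDegree with hdeg | hdeg
    · have hc := hp 1 one_pos
      rw [eq_C_of_natDegree_eq_zero hdeg, eval_C] at hc
      rw [eq_C_of_natDegree_eq_zero hdeg]
      exact .of_mem (C_mem_nonnegCoeffs hc.le)
    obtain ⟨d, p₁, rfl, hd_deg, hd_pos, hd⟩ := exists_factor_hasNonnegCoeffsMultiple hp hdeg
    have hp₁ : ∀ x, 0 < x → 0 < p₁.eval x := fun x hx =>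
      pos_of_mul_pos_right (by simpa using hp x hx) (hd_pos x hx).le
    have hd0 : d ≠ 0 := ne_zero_of_natDegree_gt hd_deg
    have hp₁0 : p₁ ≠ 0 := fun h => by simpa [h] using hp₁ 1 one_pos
    refine hd.mul (ih _ ?_ hp₁ rfl)
    rw [← hn, natDegree_mul hd0 hp₁0]
    omega

theorem eval_map_ofReal (p : ℝ[X]) (x : ℝ) :
    (p.map Complex.ofRealHom).eval (x : ℂ) = p.eval x := by
  rw [eval_map]
  exact eval₂_at_apply _ _

theorem eval_map_conj_ofReal (P : ℂ[X]) (x : ℝ) :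
    (P.map (starRingEnd ℂ)).eval (x : ℂ) = starRingEnd ℂ (P.eval x) := by
  conv_lhs => rw [eval_map, ← Complex.conj_ofReal]
  exact eval₂_at_apply _ _

theorem posCoeffPoly_iff {P : ℂ[X]} :
    PosCoeffPoly P ↔
      ∃ p : ℝ[X], p ≠ 0 ∧ p ∈ nonnegCoeffs ℝ ∧ p.map Complex.ofRealHom = P := by
  constructor
  · rintro ⟨hP0, hP⟩
    have hreal (n : ℕ) : ∃ r : ℝ, 0 ≤ r ∧ P.coeff n = r := by
      by_cases hn : n ∈ P.support
      · obtain ⟨r, hr, hPr⟩ := hP n hn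
        exact ⟨r, hr.le, hPr⟩
      · exact ⟨0, le_rfl, by simpa using hn⟩
    choose r hr hPr using hreal
    obtain ⟨p, hp⟩ := (mem_lifts P).mp <|
      (lifts_iff_coeff_lifts (f := Complex.ofRealHom) P).mpr fun n => ⟨r n, (hPr n).symm⟩
    refine ⟨p, ?_, fun n => ?_, hp⟩
    · rintro rfl
      exact hP0 (by simp [← hp])
    · have : (p.coeff n : ℂ) = r n := by rw [← hPr, ← hp, coeff_map]; rfl
      exact (Complex.ofReal_injective this) ▸ hr n
  · rintro ⟨p, hp0, hp, rfl⟩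
    refine ⟨map_ne_zero hp0, fun n hn => ⟨p.coeff n, ?_, by simp⟩⟩
    refine (hp n).lt_of_ne fun h => ?_
    simp [← h] at hn

def IsPosOnIoi (P : ℂ[X]) : Prop :=
  ∀ x : ℝ, 0 < x → ∃ r : ℝ, 0 < r ∧ P.eval (x : ℂ) = r

theorem isPosOnIoi_map_ofReal {p : ℝ[X]} (hp : ∀ x, 0 < x → 0 < p.eval x) :
    IsPosOnIoi (p.map Complex.ofRealHom) :=
  fun x hx => ⟨p.eval x, hp x hx, eval_map_ofReal p x⟩

theorem PosCoeffPoly.isPosOnIoi {P : ℂ[X]} (hP : PosCoeffPoly P) : IsPosOnIoi P := by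
  obtain ⟨p, hp0, hp, rfl⟩ := posCoeffPoly_iff.mp hP
  exact isPosOnIoi_map_ofReal fun x hx => eval_pos_of_mem_nonnegCoeffs hp hp0 hx

/-- Conjugation fixes `P` on the infinite set of positive reals, so `P` has real coefficients. -/
theorem IsPosOnIoi.exists_map_ofReal_eq {P : ℂ[X]} (hP : IsPosOnIoi P) :
    ∃ p : ℝ[X], p.map Complex.ofRealHom = P ∧ ∀ x, 0 < x → 0 < p.eval x := by
  have hconj : P.map (starRingEnd ℂ) = P := by
    refine eq_of_infinite_eval_eq _ _ (((Set.Ioi_infinite 0).image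
      Complex.ofReal_injective.injOn).mono ?_)
    rintro _ ⟨x, hx, rfl⟩
    obtain ⟨r, -, hr⟩ := hP x hx
    change (P.map _).eval _ = P.eval _
    rw [eval_map_conj_ofReal, hr, Complex.conj_ofReal]
  obtain ⟨p, rfl⟩ := (mem_lifts P).mp <|
    (lifts_iff_coeff_lifts (f := Complex.ofRealHom) P).mpr fun n =>
      ⟨_, Complex.conj_eq_iff_re.mp (by rw [← coeff_map (starRingEnd ℂ), hconj])⟩
  refine ⟨p, rfl, fun x hx => ?_⟩
  obtain ⟨r, hr, hpr⟩ := hP x hx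
  rw [eval_map_ofReal] at hpr
  exact Complex.ofReal_injective hpr ▸ hr

theorem isPositiveRatFunc_div {P Q : ℂ[X]} (hP : IsPosOnIoi P) (hQ : IsPosOnIoi Q) :
    IsPositiveRatFunc (algebraMap ℂ[X] (RatFunc ℂ) P / algebraMap ℂ[X] (RatFunc ℂ) Q) := by
  obtain ⟨p, rfl, hp⟩ := hP.exists_map_ofReal_eq
  obtain ⟨q, rfl, hq⟩ := hQ.exists_map_ofReal_eq
  obtain ⟨m, hm, hm_mem, hpm⟩ := hasNonnegCoeffsMultiple_of_eval_pos hp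
  obtain ⟨n, hn, hn_mem, hqn⟩ := hasNonnegCoeffsMultiple_of_eval_pos hq
  have hp0 : p ≠ 0 := fun h => by simpa [h] using hp 1 one_pos
  have hq0 : q ≠ 0 := fun h => by simpa [h] using hq 1 one_pos
  have hmn0 : (m * n).map Complex.ofRealHom ≠ 0 := map_ne_zero (hm.mul hn).ne_zero
  refine ⟨(p * m * n).map Complex.ofRealHom, (q * n * m).map Complex.ofRealHom,
    posCoeffPoly_iff.mpr ⟨_, mul_ne_zero (mul_ne_zero hp0 hm.ne_zero) hn.ne_zero,
      mul_mem hpm hn_mem, rfl⟩,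
    posCoeffPoly_iff.mpr ⟨_, mul_ne_zero (mul_ne_zero hq0 hn.ne_zero) hm.ne_zero,
      mul_mem hqn hm_mem, rfl⟩, ?_⟩
  rw [mul_assoc p, mul_right_comm q, mul_assoc q, Polynomial.map_mul (p := p),
    Polynomial.map_mul (p := q), map_mul, map_mul (algebraMap _ _) (q.map _),
    mul_div_mul_right _ _ (RatFunc.algebraMap_ne_zero hmn0)]

namespace IsPositiveRatFunc

variable {f : RatFunc ℂ}

theorem eval_denom_ne_zero (hf : IsPositiveRatFunc f) {x : ℝ} (hx : 0 < x) :
    f.denom.eval (x : ℂ) ≠ 0 := by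
  obtain ⟨P, Q, -, hQ, rfl⟩ := hf
  obtain ⟨r, hr, hQr⟩ := hQ.isPosOnIoi x hx
  intro h
  have := eval_dvd (x := (x : ℂ)) (RatFunc.denom_div_dvd P Q)
  rw [h, zero_dvd_iff, hQr] at this
  exact hr.ne' (Complex.ofReal_eq_zero.mp this)

theorem exists_eval_num_div_eval_denom (hf : IsPositiveRatFunc f) {x : ℝ} (hx : 0 < x) :
    ∃ r : ℝ, 0 < r ∧ f.num.eval (x : ℂ) / f.denom.eval (x : ℂ) = r := by
  have hd := hf.eval_denom_ne_zero hx
  obtain ⟨P, Q, hP, hQ, hfPQ⟩ := hf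
  obtain ⟨p, hp, hPp⟩ := hP.isPosOnIoi x hx
  obtain ⟨q, hq, hQq⟩ := hQ.isPosOnIoi x hx
  have hcross := congrArg (eval (x : ℂ)) <|
    (RatFunc.num_mul_eq_mul_denom_iff hQ.1).mpr hfPQ
  simp only [eval_mul] at hcross
  refine ⟨p / q, div_pos hp hq, ?_⟩
  rw [Complex.ofReal_div, div_eq_div_iff hd (by exact_mod_cast hq.ne'), ← hPp, ← hQq]
  linear_combination hcross

end IsPositiveRatFunc

theorem isPositiveRatFunc_of_eval_pos {f : RatFunc ℂ}
    (hden : ∀ x : ℝ, 0 < x → f.denom.eval (x : ℂ) ≠ 0)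
    (hval : ∀ x : ℝ, 0 < x →
      ∃ r : ℝ, 0 < r ∧ f.num.eval (x : ℂ) / f.denom.eval (x : ℂ) = r) :
    IsPositiveRatFunc f := by
  set D := f.denom.map (starRingEnd ℂ)
  have hD : D ≠ 0 := map_ne_zero f.denom_ne_zero
  have hf : f = algebraMap ℂ[X] (RatFunc ℂ) (f.num * D) / algebraMap _ _ (f.denom * D) := by
    rw [map_mul, map_mul, mul_div_mul_right _ _ (RatFunc.algebraMap_ne_zero hD),
      RatFunc.num_div_denom]
  rw [hf]
  refine isPositiveRatFunc_div (fun x hx => ?_) (fun x hx => ?_)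
  · obtain ⟨r, hr, hnum⟩ := hval x hx
    rw [div_eq_iff (hden x hx)] at hnum
    refine ⟨r * Complex.normSq (f.denom.eval (x : ℂ)),
      mul_pos hr (Complex.normSq_pos.mpr (hden x hx)), ?_⟩
    rw [eval_mul, eval_map_conj_ofReal, hnum, mul_assoc, Complex.mul_conj, Complex.ofReal_mul]
  · exact ⟨_, Complex.normSq_pos.mpr (hden x hx), by
      rw [eval_mul, eval_map_conj_ofReal, Complex.mul_conj]⟩

theorem stmt2_general (f : RatFunc ℂ) :
    IsPositiveRatFunc f ↔
      ((∀ x : ℝ, 0 < x → Polynomial.eval (x : ℂ) f.denom ≠ 0) ∧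
       (∀ x : ℝ, 0 < x → ∃ r : ℝ, 0 < r ∧
          Polynomial.eval (x : ℂ) f.num / Polynomial.eval (x : ℂ) f.denom = (r : ℂ))) :=
  ⟨fun hf => ⟨fun _ hx => hf.eval_denom_ne_zero hx,
      fun _ hx => hf.exists_eval_num_div_eval_denom hx⟩,
    fun h => isPositiveRatFunc_of_eval_pos h.1 h.2⟩

/-- A nonzero rational function is positive iff it has no pole at any positive
real number and takes positive real values on the positive reals. -/
theorem stmt2 (f : RatFunc ℂ) (hf : f ≠ 0) :
    IsPositiveRatFunc f ↔
      ((∀ x : ℝ, 0 < x → Polynomial.eval (x : ℂ) f.denom ≠ 0) ∧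
       (∀ x : ℝ, 0 < x → ∃ r : ℝ, 0 < r ∧
          Polynomial.eval (x : ℂ) f.num / Polynomial.eval (x : ℂ) f.denom = (r : ℂ))) :=
  stmt2_general f
end

section
/- Ultra-discretization is functorial: for positive rational maps f : T₁ → T₂ and g : T₂ → T₃ between algebraic tori, the induced maps f̂ : X_*(T₁) → X_*(T₂) and ĝ : X_*(T₂) → X_*(T₃) on cocharacter lattices, defined by ⟨χ, f̂(ξ)⟩ = v(χ ∘ f ∘ ξ) for every character χ and cocharacter ξ, satisfy (g ∘ f)^ = ĝ ∘ f̂. -/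
open Finset Filter

/-- A function on the positive part of the torus `(ℂ^×)^m` (modeled on positive
real points) is a positive rational function if it is a ratio of two positive
linear combinations of characters (Laurent monomials). -/
def IsPosRatFn {m : ℕ} (g : (Fin m → ℝ) → ℝ) : Prop :=
  ∃ (s t : Finset (Fin m → ℤ)) (a b : (Fin m → ℤ) → ℝ),
    s.Nonempty ∧ t.Nonempty ∧ (∀ χ ∈ s, 0 < a χ) ∧ (∀ χ ∈ t, 0 < b χ) ∧
    ∀ x : Fin m → ℝ, (∀ i, 0 < x i) →
      g x = (∑ χ ∈ s, a χ * ∏ i, x i ^ χ i) / (∑ χ ∈ t, b χ * ∏ i, x i ^ χ i)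

/-- A positive rational map between tori. -/
def IsPosRatMap {m n : ℕ} (f : (Fin m → ℝ) → (Fin n → ℝ)) : Prop :=
  (∀ x : Fin m → ℝ, (∀ i, 0 < x i) → ∀ j, 0 < f x j) ∧
  ∀ j : Fin n, IsPosRatFn (fun x => f x j)

/-- `φ : X_*(T) → X_*(T')` (a map of cocharacter lattices `ℤ^m → ℤ^n`) is the
ultra-discretization `f̂` of the positive map `f`:  for every cocharacter `ξ`
and every (coordinate) character `j`, `⟨χ_j, f̂(ξ)⟩` is the degree of the pole
at infinity of `χ_j ∘ f ∘ ξ`, i.e. `f((t^{ξ_i})_i)_j / t^{φ(ξ)_j}` tends to a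
positive constant as `t → ∞`. -/
def IsHatOf {m n : ℕ} (f : (Fin m → ℝ) → (Fin n → ℝ))
    (φ : (Fin m → ℤ) → (Fin n → ℤ)) : Prop :=
  ∀ (ξ : Fin m → ℤ) (j : Fin n), ∃ C : ℝ, 0 < C ∧
    Tendsto (fun t : ℝ => f (fun i => t ^ ξ i) j / t ^ φ ξ j) atTop (nhds C)

/-!
Along a curve whose coordinates have pole orders `η`, a Laurent polynomial with positive
coefficients has pole order the maximum of the orders of its monomials: leading terms cannot
cancel. Hence a positive rational function `g` has a tropicalization `trop` with
`v(g ∘ u) = trop η` for every such curve `u`. Testing on the cocharacters `t ↦ t ^ η` identifies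
`trop` with `ĝ`, and testing on the curve `t ↦ f (t ^ ξ)`, whose orders are `f̂ ξ`, gives
`(g ∘ f)^ ξ = ĝ (f̂ ξ)`.
-/

open scoped Topology

/-- The real counterpart of `v(u) = e`. -/
def HasPoleOrder (u : ℝ → ℝ) (e : ℤ) : Prop :=
  ∃ C : ℝ, 0 < C ∧ Tendsto (fun t => u t / t ^ e) atTop (𝓝 C)

theorem hasPoleOrder_zpow (e : ℤ) : HasPoleOrder (fun t => t ^ e) e :=
  ⟨1, one_pos, tendsto_const_nhds.congr' <| by
    filter_upwards [eventually_ne_atTop 0] with t ht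
    rw [div_self (zpow_ne_zero e ht)]⟩

namespace HasPoleOrder

variable {u w : ℝ → ℝ} {e d : ℤ}

theorem congr' (h : HasPoleOrder u e) (huw : u =ᶠ[atTop] w) : HasPoleOrder w e := by
  obtain ⟨C, hC, hu⟩ := h
  exact ⟨C, hC, hu.congr' (huw.mono fun t ht => by rw [ht])⟩

theorem eventually_pos (h : HasPoleOrder u e) : ∀ᶠ t in atTop, 0 < u t := by
  obtain ⟨C, hC, hu⟩ := h
  filter_upwards [hu.eventually (lt_mem_nhds hC), eventually_gt_atTop 0] with t hut ht
  simpa [div_pos_iff_of_pos_right (zpow_pos ht e)] using hut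

theorem const_mul (h : HasPoleOrder u e) {a : ℝ} (ha : 0 < a) :
    HasPoleOrder (fun t => a * u t) e := by
  obtain ⟨C, hC, hu⟩ := h
  exact ⟨a * C, mul_pos ha hC, (hu.const_mul a).congr fun t => by rw [mul_div_assoc]⟩

theorem mul (hu : HasPoleOrder u e) (hw : HasPoleOrder w d) :
    HasPoleOrder (fun t => u t * w t) (e + d) := by
  obtain ⟨C, hC, hu⟩ := hu
  obtain ⟨D, hD, hw⟩ := hw
  refine ⟨C * D, mul_pos hC hD, (hu.mul hw).congr' ?_⟩
  filter_upwards [eventually_ne_atTop 0] with t ht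
  rw [zpow_add₀ ht, mul_div_mul_comm]

theorem div (hu : HasPoleOrder u e) (hw : HasPoleOrder w d) :
    HasPoleOrder (fun t => u t / w t) (e - d) := by
  obtain ⟨C, hC, hu⟩ := hu
  obtain ⟨D, hD, hw⟩ := hw
  refine ⟨C / D, div_pos hC hD, (hu.div hw hD.ne').congr' ?_⟩
  filter_upwards [eventually_ne_atTop 0] with t ht
  rw [Pi.div_apply, zpow_sub₀ ht, div_div_div_comm]

theorem zpow (h : HasPoleOrder u e) (k : ℤ) : HasPoleOrder (fun t => u t ^ k) (k * e) := by
  obtain ⟨C, hC, hu⟩ := h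
  refine ⟨C ^ k, zpow_pos hC k,
    (((continuousAt_zpow₀ C k (.inl hC.ne')).tendsto).comp hu).congr fun t => ?_⟩
  rw [Function.comp_apply, div_zpow, mul_comm, zpow_mul]

theorem prod {ι : Type*} (s : Finset ι) {u : ι → ℝ → ℝ} {e : ι → ℤ}
    (h : ∀ i ∈ s, HasPoleOrder (u i) (e i)) :
    HasPoleOrder (fun t => ∏ i ∈ s, u i t) (∑ i ∈ s, e i) := by
  induction s using Finset.cons_induction with
  | empty => simpa using hasPoleOrder_zpow 0
  | cons i s hi ih =>
    simp only [prod_cons, sum_cons]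
    exact (h i (mem_cons_self i s)).mul (ih fun j hj => h j (mem_cons_of_mem hj))

theorem tendsto_div_zpow_zero (h : HasPoleOrder u e) (hed : e < d) :
    Tendsto (fun t => u t / t ^ d) atTop (𝓝 0) := by
  obtain ⟨C, -, hu⟩ := h
  have hlow : Tendsto (fun t : ℝ => t ^ (e - d)) atTop (𝓝 0) :=
    tendsto_zpow_atTop_zero (sub_neg.mpr hed)
  refine (mul_zero C ▸ hu.mul hlow).congr' ?_
  filter_upwards [eventually_ne_atTop 0] with t ht
  rw [zpow_sub₀ ht, mul_div, div_mul_cancel₀ _ (zpow_ne_zero e ht)]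

theorem add_of_lt (hu : HasPoleOrder u e) (hw : HasPoleOrder w d) (hed : e < d) :
    HasPoleOrder (fun t => u t + w t) d := by
  obtain ⟨D, hD, hw⟩ := hw
  exact ⟨0 + D, by simpa using hD,
    ((hu.tendsto_div_zpow_zero hed).add hw).congr fun t => (add_div _ _ _).symm⟩

theorem add (hu : HasPoleOrder u e) (hw : HasPoleOrder w d) :
    HasPoleOrder (fun t => u t + w t) (max e d) := by
  rcases lt_trichotomy e d with hed | rfl | hde
  · simpa [max_eq_right hed.le] using hu.add_of_lt hw hed
  · obtain ⟨C, hC, hu⟩ := hu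
    obtain ⟨D, hD, hw⟩ := hw
    exact ⟨C + D, add_pos hC hD, by simpa [add_div] using hu.add hw⟩
  · simpa [max_eq_left hde.le, add_comm] using hw.add_of_lt hu hde

theorem sum {ι : Type*} {s : Finset ι} (hs : s.Nonempty) {u : ι → ℝ → ℝ} {e : ι → ℤ}
    (h : ∀ i ∈ s, HasPoleOrder (u i) (e i)) :
    HasPoleOrder (fun t => ∑ i ∈ s, u i t) (s.sup' hs e) := by
  induction hs using Finset.Nonempty.cons_induction with
  | singleton i => simpa using h i (mem_singleton_self i)
  | cons i s hi hs ih =>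
    simp only [sum_cons, sup'_cons hs]
    exact (h i (mem_cons_self i s)).add (ih fun j hj => h j (mem_cons_of_mem hj))

theorem unique (hu : HasPoleOrder u e) (hd : HasPoleOrder u d) : e = d := by
  by_contra hne
  wlog hed : e < d generalizing e d
  · exact this hd hu (Ne.symm hne) (lt_of_le_of_ne (not_lt.mp hed) (Ne.symm hne))
  obtain ⟨D, hD, hlim⟩ := hd
  exact hD.ne (tendsto_nhds_unique (hu.tendsto_div_zpow_zero hed) hlim)

end HasPoleOrder

theorem hasPoleOrder_laurent {n : ℕ} (s : Finset (Fin n → ℤ)) (hs : s.Nonempty)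
    {a : (Fin n → ℤ) → ℝ} (ha : ∀ χ ∈ s, 0 < a χ) {u : ℝ → Fin n → ℝ} {η : Fin n → ℤ}
    (hu : ∀ i, HasPoleOrder (fun t => u t i) (η i)) :
    HasPoleOrder (fun t => ∑ χ ∈ s, a χ * ∏ i, u t i ^ χ i)
      (s.sup' hs fun χ => ∑ i, χ i * η i) :=
  HasPoleOrder.sum hs fun χ hχ =>
    (HasPoleOrder.prod univ fun i _ => (hu i).zpow (χ i)).const_mul (ha χ hχ)

/-- The witness `trop` is the tropicalization of `g`. -/
theorem IsPosRatFn.exists_hasPoleOrder_comp {n : ℕ} {g : (Fin n → ℝ) → ℝ} (hg : IsPosRatFn g) :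
    ∃ trop : (Fin n → ℤ) → ℤ, ∀ (u : ℝ → Fin n → ℝ) (η : Fin n → ℤ),
      (∀ i, HasPoleOrder (fun t => u t i) (η i)) → HasPoleOrder (fun t => g (u t)) (trop η) := by
  obtain ⟨s, t, a, b, hs, ht, ha, hb, hg⟩ := hg
  refine ⟨fun η => (s.sup' hs fun χ => ∑ i, χ i * η i) - t.sup' ht fun χ => ∑ i, χ i * η i,
    fun u η hu => ?_⟩
  refine ((hasPoleOrder_laurent s hs ha hu).div (hasPoleOrder_laurent t ht hb hu)).congr' ?_
  filter_upwards [eventually_all.mpr fun i => (hu i).eventually_pos] with x hx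
  exact (hg (u x) hx).symm

theorem stmt4_general {m n k : ℕ} (f : (Fin m → ℝ) → (Fin n → ℝ))
    (g : (Fin n → ℝ) → (Fin k → ℝ))
    (hg : IsPosRatMap g)
    (φ : (Fin m → ℤ) → (Fin n → ℤ)) (ψ : (Fin n → ℤ) → (Fin k → ℤ))
    (hφ : IsHatOf f φ) (hψ : IsHatOf g ψ) :
    IsHatOf (g ∘ f) (ψ ∘ φ) := by
  intro ξ j
  obtain ⟨trop, htrop⟩ := (hg.2 j).exists_hasPoleOrder_comp
  have htrop_eq : ∀ η, trop η = ψ η j := fun η =>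
    (htrop (fun t i => t ^ η i) η fun i => hasPoleOrder_zpow (η i)).unique (hψ η j)
  have hcomp : HasPoleOrder (fun t => g (f fun i => t ^ ξ i) j) (ψ (φ ξ) j) :=
    htrop_eq (φ ξ) ▸ htrop (fun t => f fun i => t ^ ξ i) (φ ξ) (hφ ξ)
  exact hcomp

/-- Functoriality of ultra-discretization: `(g ∘ f)^ = ĝ ∘ f̂`. -/
theorem stmt4 {m n k : ℕ} (f : (Fin m → ℝ) → (Fin n → ℝ))
    (g : (Fin n → ℝ) → (Fin k → ℝ))
    (hf : IsPosRatMap f) (hg : IsPosRatMap g)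
    (φ : (Fin m → ℤ) → (Fin n → ℤ)) (ψ : (Fin n → ℤ) → (Fin k → ℤ))
    (hφ : IsHatOf f φ) (hψ : IsHatOf g ψ) :
    IsHatOf (g ∘ f) (ψ ∘ φ) :=
  stmt4_general f g hg φ ψ hφ hψ
end

section
/- Let φ(x) = Σ_{α∈A} a_α x₁^{α₁}⋯x_m^{α_m} be a nonzero polynomial with A the finite set of exponent multi-indices having a_α ≠ 0. Let α̃ be a vertex (extreme point) of the convex hull of A in ℝ^m, so there exists c = (c₁,…,c_m) ∈ ℤ^m with Σ α̃_i c_i > Σ α_i c_i for all α ∈ A \ {α̃}. If f₁(t),…,f_m(t) are nonzero rational functions with v(f_i) = c_i (pole degree at infinity), and f_i(t) > 0 for large real t, then φ(f₁(t),…,f_m(t)) is not identically zero; in fact v(φ(f₁,…,f_m)) = Σ_i α̃_i c_i whenever a_{α̃} ≠ 0 and all a_α lie in ℝ with a_{α̃} ≠ 0. -/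
open Finset Filter

/-- `v(f)` = degree of the pole of `f` at infinity. -/
noncomputable def polev (f : RatFunc ℝ) : ℤ :=
  (f.num.natDegree : ℤ) - (f.denom.natDegree : ℤ)

lemma polev_eq_intDegree (f : RatFunc ℝ) : polev f = f.intDegree := rfl

lemma intDegree_pow' {x : RatFunc ℝ} (hx : x ≠ 0) (n : ℕ) :
    (x ^ n).intDegree = n * x.intDegree := by
  induction n with
  | zero => simp [RatFunc.intDegree_one]
  | succ k ih =>
    rw [pow_succ, RatFunc.intDegree_mul (pow_ne_zero _ hx) hx, ih]
    push_cast; ring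

lemma intDegree_prod' {ι : Type*} [DecidableEq ι] (s : Finset ι) (g : ι → RatFunc ℝ)
    (hg : ∀ i ∈ s, g i ≠ 0) :
    (∏ i ∈ s, g i).intDegree = ∑ i ∈ s, (g i).intDegree := by
  induction s using Finset.induction with
  | empty => simp [RatFunc.intDegree_one]
  | @insert i s hnot ih =>
    rw [Finset.prod_insert hnot, Finset.sum_insert hnot,
      RatFunc.intDegree_mul (hg i (Finset.mem_insert_self _ _))
        (Finset.prod_ne_zero_iff.2 fun j hj => hg j (Finset.mem_insert_of_mem hj)),
      ih fun j hj => hg j (Finset.mem_insert_of_mem hj)]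

lemma sum_intDegree_lt {ι : Type*} [DecidableEq ι] (s : Finset ι) (t : ι → RatFunc ℝ) (D : ℤ)
    (h : ∀ α ∈ s, t α ≠ 0 ∧ (t α).intDegree < D) :
    (∑ α ∈ s, t α) = 0 ∨ (∑ α ∈ s, t α) ≠ 0 ∧ (∑ α ∈ s, t α).intDegree < D := by
  induction s using Finset.induction with
  | empty => simp
  | @insert i s hnot ih =>
    rw [Finset.sum_insert hnot]
    obtain ⟨hi0, hid⟩ := h i (Finset.mem_insert_self _ _)
    rcases ih (fun j hj => h j (Finset.mem_insert_of_mem hj)) with h0 | ⟨hne, hlt⟩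
    · rw [h0, add_zero]; exact Or.inr ⟨hi0, hid⟩
    · by_cases hsum : t i + ∑ α ∈ s, t α = 0
      · exact Or.inl hsum
      · refine Or.inr ⟨hsum, ?_⟩
        calc (t i + ∑ α ∈ s, t α).intDegree
            ≤ max (t i).intDegree (∑ α ∈ s, t α).intDegree :=
              RatFunc.intDegree_add_le hne hsum
          _ < D := max_lt hid hlt

lemma add_dominant {x y : RatFunc ℝ} (hx : x ≠ 0)
    (hy : y = 0 ∨ y ≠ 0 ∧ y.intDegree < x.intDegree) :
    x + y ≠ 0 ∧ (x + y).intDegree = x.intDegree := by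
  rcases hy with rfl | ⟨hy0, hylt⟩
  · simpa using hx
  have hne : x + y ≠ 0 := by
    intro h
    have hyx : y = -x := eq_neg_of_add_eq_zero_right h
    rw [hyx, RatFunc.intDegree_neg] at hylt; exact lt_irrefl _ hylt
  refine ⟨hne, le_antisymm ?_ ?_⟩
  · have := RatFunc.intDegree_add_le hy0 hne
    exact this.trans (max_le le_rfl hylt.le)
  · have hx' : (x + y) + (-y) ≠ 0 := by simpa using hx
    have h2 : x.intDegree ≤ max (x + y).intDegree (-y).intDegree := by
      have := RatFunc.intDegree_add_le (x := x + y) (y := -y) (neg_ne_zero.2 hy0) hx'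
      simpa using this
    rw [RatFunc.intDegree_neg] at h2
    rcases max_cases (x + y).intDegree y.intDegree with ⟨he, _⟩ | ⟨he, _⟩
    · omega
    · omega

/-- Let `φ(x) = Σ_{α∈A} a_α x^α` be a nonzero polynomial, `α̃ ∈ A` a vertex of
the convex hull of the exponent set `A`, witnessed by `c ∈ ℤ^m` with
`⟨α̃,c⟩ > ⟨α,c⟩` for every other `α ∈ A`.  If `f₁,…,f_m` are nonzero rational
functions with `v(f_i) = c_i` which are positive for large real `t`, then
`φ(f₁,…,f_m) ≠ 0` and `v(φ(f₁,…,f_m)) = Σ_i α̃_i c_i`. -/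
theorem stmt5 (m : ℕ) (A : Finset (Fin m → ℕ)) (a : (Fin m → ℕ) → ℝ)
    (ha : ∀ α ∈ A, a α ≠ 0) (αt : Fin m → ℕ) (hαt : αt ∈ A)
    (c : Fin m → ℤ)
    (hdom : ∀ α ∈ A, α ≠ αt → ∑ i, (α i : ℤ) * c i < ∑ i, (αt i : ℤ) * c i)
    (f : Fin m → RatFunc ℝ) (hf : ∀ i, f i ≠ 0)
    (hv : ∀ i, polev (f i) = c i)
    (hpos : ∀ i, ∀ᶠ t : ℝ in atTop,
      0 < Polynomial.eval t (f i).num / Polynomial.eval t (f i).denom) :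
    (∑ α ∈ A, RatFunc.C (a α) * ∏ i, f i ^ α i) ≠ 0 ∧
    polev (∑ α ∈ A, RatFunc.C (a α) * ∏ i, f i ^ α i) = ∑ i, (αt i : ℤ) * c i := by
  -- degree of each term
  have hterm : ∀ α ∈ A, (RatFunc.C (a α) * ∏ i, f i ^ α i) ≠ 0 ∧
      (RatFunc.C (a α) * ∏ i, f i ^ α i).intDegree = ∑ i, (α i : ℤ) * c i := by
    intro α hα
    have hC : (RatFunc.C (a α) : RatFunc ℝ) ≠ 0 :=
      (map_ne_zero RatFunc.C).mpr (ha α hα)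
    have hp : (∏ i, f i ^ α i) ≠ 0 :=
      Finset.prod_ne_zero_iff.2 fun i _ => pow_ne_zero _ (hf i)
    refine ⟨mul_ne_zero hC hp, ?_⟩
    rw [RatFunc.intDegree_mul hC hp, RatFunc.intDegree_C,
      intDegree_prod' _ _ (fun i _ => pow_ne_zero _ (hf i)), zero_add]
    refine Finset.sum_congr rfl fun i _ => ?_
    rw [intDegree_pow' (hf i), ← hv i, polev_eq_intDegree]
  -- split off the dominant term
  have hsplit : (∑ α ∈ A, RatFunc.C (a α) * ∏ i, f i ^ α i)
      = (RatFunc.C (a αt) * ∏ i, f i ^ αt i)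
        + ∑ α ∈ A.erase αt, RatFunc.C (a α) * ∏ i, f i ^ α i :=
    (Finset.add_sum_erase A _ hαt).symm
  obtain ⟨ht0, htd⟩ := hterm αt hαt
  have hrest := sum_intDegree_lt (A.erase αt)
    (fun α => RatFunc.C (a α) * ∏ i, f i ^ α i) (∑ i, (αt i : ℤ) * c i)
    (fun α hα => by
      obtain ⟨h1, h2⟩ := hterm α (Finset.mem_of_mem_erase hα)
      exact ⟨h1, h2 ▸ hdom α (Finset.mem_of_mem_erase hα) (Finset.ne_of_mem_erase hα)⟩)
  rw [← htd] at hrest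
  have := add_dominant ht0 hrest
  rw [hsplit, polev_eq_intDegree]
  exact ⟨this.1, this.2.trans htd⟩
end

section
/- Product structure axioms: let X and Y carry ℂ^×-actions e_i^c together with functions ε_i, φ_i with φ_i = γ_i ε_i, satisfying ε_i(e_i^c(x)) = c^{−1} ε_i(x), φ_i(e_i^c(x)) = c φ_i(x), and γ_i(e_i^c(x)) = c² γ_i(x). Define on X × Y: γ_i(x,y) := γ_i(x)γ_i(y), ε_i(x,y) := ε_i(x) + ε_i(x)ε_i(y)/φ_i(x), and e_i^c(x,y) := (e_i^{c₁}(x), e_i^{c/c₁}(y)) where c₁ = (c φ_i(x) + ε_i(y))/(φ_i(x) + ε_i(y)). Then ε_i(e_i^c(x,y)) = c^{−1} ε_i(x,y) and γ_i(e_i^c(x,y)) = c² γ_i(x,y), and e_i^{c} ∘ e_i^{c'} = e_i^{cc'} on X × Y. -/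
/-! The product action depends on `(x, y)` only through `a = φ(x)` and `b = ε(y)`, via the factor
`c₁ = (c a + b)/(a + b)`. Since `e^{c₁}` scales `φ(x)` by `c₁` and `e^{c/c₁}` scales `ε(y)` by
`c₁/c`, the action sends `(a, b)` to `(c₁ a, c₁ b / c)`, whose factor for `c'` is
`(c c' a + b)/(c a + b)`; multiplying by `c₁` gives the factor for `c c'`, which with the
multiplicativity of the actions on `X` and `Y` yields `e^{c'} ∘ e^{c} = e^{c c'}`. The
transformation laws of `ε` and `γ` are then identities of rational functions in `c`, `a`, `b`. -/

/-- The Berenstein–Kazhdan product action on `X × Y`: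
`e_i^c(x,y) = (e_i^{c₁} x, e_i^{c/c₁} y)` with
`c₁ = (c φ_i(x) + ε_i(y))/(φ_i(x) + ε_i(y))`, `φ_i(x) = γ_i(x) ε_i(x)`. -/
noncomputable def prodE {X Y : Type*} (eX : ℂ → X → X) (eY : ℂ → Y → Y)
    (epsX gamX : X → ℂ) (epsY : Y → ℂ) (c : ℂ) (p : X × Y) : X × Y :=
  (eX ((c * (gamX p.1 * epsX p.1) + epsY p.2) / (gamX p.1 * epsX p.1 + epsY p.2)) p.1,
   eY (c / ((c * (gamX p.1 * epsX p.1) + epsY p.2) / (gamX p.1 * epsX p.1 + epsY p.2))) p.2)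

/-- `ε_i(x,y) := ε_i(x) + ε_i(x) ε_i(y)/φ_i(x)`. -/
noncomputable def prodEps {X Y : Type*} (epsX gamX : X → ℂ) (epsY : Y → ℂ)
    (p : X × Y) : ℂ :=
  epsX p.1 + epsX p.1 * epsY p.2 / (gamX p.1 * epsX p.1)

/-- `γ_i(x,y) := γ_i(x) γ_i(y)`. -/
noncomputable def prodGam {X Y : Type*} (gamX : X → ℂ) (gamY : Y → ℂ)
    (p : X × Y) : ℂ :=
  gamX p.1 * gamY p.2

noncomputable def prodFactor {K : Type*} [Field K] (a b c : K) : K := (c * a + b) / (a + b)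

section Factor

variable {K : Type*} [Field K] {a b c : K}

lemma prodFactor_ne_zero (hab : a + b ≠ 0) (hcab : c * a + b ≠ 0) : prodFactor a b c ≠ 0 :=
  div_ne_zero hcab hab

lemma inv_mul_add_inv_mul_div_prodFactor (ha : a ≠ 0) (hc : c ≠ 0) (hab : a + b ≠ 0)
    (hcab : c * a + b ≠ 0) (e : K) :
    (prodFactor a b c)⁻¹ * e + (prodFactor a b c)⁻¹ * e * ((c / prodFactor a b c)⁻¹ * b)
        / (prodFactor a b c * a) = c⁻¹ * (e + e * b / a) := by
  unfold prodFactor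
  field_simp

lemma prodFactor_rescale_mul (hc : c ≠ 0) (hab : a + b ≠ 0) (hcab : c * a + b ≠ 0) (c' : K) :
    prodFactor (prodFactor a b c * a) ((c / prodFactor a b c)⁻¹ * b) c' * prodFactor a b c
      = prodFactor a b (c * c') := by
  unfold prodFactor
  field_simp

lemma div_prodFactor_rescale_mul_div (hc : c ≠ 0) (hab : a + b ≠ 0) (hcab : c * a + b ≠ 0)
    (c' : K) :
    c' / prodFactor (prodFactor a b c * a) ((c / prodFactor a b c)⁻¹ * b) c'
        * (c / prodFactor a b c) = c * c' / prodFactor a b (c * c') := by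
  rw [div_mul_div_comm, mul_comm c', prodFactor_rescale_mul hc hab hcab]

end Factor

lemma gam_mul_eps_act {X : Type*} (e : ℂ → X → X) (eps gam : X → ℂ)
    (heps : ∀ c : ℂ, c ≠ 0 → ∀ x, eps (e c x) = c⁻¹ * eps x)
    (hgam : ∀ c : ℂ, c ≠ 0 → ∀ x, gam (e c x) = c ^ 2 * gam x) {c : ℂ} (hc : c ≠ 0) (x : X) :
    gam (e c x) * eps (e c x) = c * (gam x * eps x) := by
  rw [heps c hc, hgam c hc]
  field_simp

section Product

variable {X Y : Type*} (eX : ℂ → X → X) (eY : ℂ → Y → Y) (epsX gamX : X → ℂ) (epsY gamY : Y → ℂ)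

lemma prodE_eq_prodFactor (c : ℂ) (p : X × Y) :
    prodE eX eY epsX gamX epsY c p =
      (eX (prodFactor (gamX p.1 * epsX p.1) (epsY p.2) c) p.1,
       eY (c / prodFactor (gamX p.1 * epsX p.1) (epsY p.2) c) p.2) := rfl

variable {eX eY epsX gamX epsY gamY}

lemma gam_mul_eps_prodE_fst (hXeps : ∀ c : ℂ, c ≠ 0 → ∀ x, epsX (eX c x) = c⁻¹ * epsX x)
    (hXgam : ∀ c : ℂ, c ≠ 0 → ∀ x, gamX (eX c x) = c ^ 2 * gamX x) {c : ℂ} {p : X × Y}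
    (hd1 : gamX p.1 * epsX p.1 + epsY p.2 ≠ 0) (hd2 : c * (gamX p.1 * epsX p.1) + epsY p.2 ≠ 0) :
    gamX (prodE eX eY epsX gamX epsY c p).1 * epsX (prodE eX eY epsX gamX epsY c p).1
      = prodFactor (gamX p.1 * epsX p.1) (epsY p.2) c * (gamX p.1 * epsX p.1) :=
  gam_mul_eps_act eX epsX gamX hXeps hXgam (prodFactor_ne_zero hd1 hd2) p.1

lemma epsY_prodE_snd (hYeps : ∀ c : ℂ, c ≠ 0 → ∀ y, epsY (eY c y) = c⁻¹ * epsY y) {c : ℂ}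
    (hc : c ≠ 0) {p : X × Y} (hd1 : gamX p.1 * epsX p.1 + epsY p.2 ≠ 0)
    (hd2 : c * (gamX p.1 * epsX p.1) + epsY p.2 ≠ 0) :
    epsY (prodE eX eY epsX gamX epsY c p).2
      = (c / prodFactor (gamX p.1 * epsX p.1) (epsY p.2) c)⁻¹ * epsY p.2 :=
  hYeps _ (div_ne_zero hc (prodFactor_ne_zero hd1 hd2)) p.2

lemma prodEps_prodE (hXeps : ∀ c : ℂ, c ≠ 0 → ∀ x, epsX (eX c x) = c⁻¹ * epsX x)
    (hXgam : ∀ c : ℂ, c ≠ 0 → ∀ x, gamX (eX c x) = c ^ 2 * gamX x)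
    (hYeps : ∀ c : ℂ, c ≠ 0 → ∀ y, epsY (eY c y) = c⁻¹ * epsY y) {c : ℂ} (hc : c ≠ 0)
    {p : X × Y} (h1 : epsX p.1 ≠ 0) (h2 : gamX p.1 ≠ 0)
    (hd1 : gamX p.1 * epsX p.1 + epsY p.2 ≠ 0) (hd2 : c * (gamX p.1 * epsX p.1) + epsY p.2 ≠ 0) :
    prodEps epsX gamX epsY (prodE eX eY epsX gamX epsY c p) = c⁻¹ * prodEps epsX gamX epsY p := by
  unfold prodEps
  rw [gam_mul_eps_prodE_fst hXeps hXgam hd1 hd2, epsY_prodE_snd hYeps hc hd1 hd2,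
    prodE_eq_prodFactor, hXeps _ (prodFactor_ne_zero hd1 hd2)]
  exact inv_mul_add_inv_mul_div_prodFactor (mul_ne_zero h2 h1) hc hd1 hd2 _

lemma prodGam_prodE (hXgam : ∀ c : ℂ, c ≠ 0 → ∀ x, gamX (eX c x) = c ^ 2 * gamX x)
    (hYgam : ∀ c : ℂ, c ≠ 0 → ∀ y, gamY (eY c y) = c ^ 2 * gamY y) {c : ℂ} (hc : c ≠ 0)
    {p : X × Y} (hd1 : gamX p.1 * epsX p.1 + epsY p.2 ≠ 0)
    (hd2 : c * (gamX p.1 * epsX p.1) + epsY p.2 ≠ 0) :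
    prodGam gamX gamY (prodE eX eY epsX gamX epsY c p) = c ^ 2 * prodGam gamX gamY p := by
  have hk := prodFactor_ne_zero hd1 hd2
  rw [prodGam, prodE_eq_prodFactor, hXgam _ hk, hYgam _ (div_ne_zero hc hk), prodGam]
  field_simp

lemma prodE_prodE (hXeps : ∀ c : ℂ, c ≠ 0 → ∀ x, epsX (eX c x) = c⁻¹ * epsX x)
    (hXgam : ∀ c : ℂ, c ≠ 0 → ∀ x, gamX (eX c x) = c ^ 2 * gamX x)
    (hYeps : ∀ c : ℂ, c ≠ 0 → ∀ y, epsY (eY c y) = c⁻¹ * epsY y)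
    (hXmul : ∀ c c' : ℂ, ∀ x, eX c (eX c' x) = eX (c * c') x)
    (hYmul : ∀ c c' : ℂ, ∀ y, eY c (eY c' y) = eY (c * c') y) {c : ℂ} (hc : c ≠ 0) (c' : ℂ)
    {p : X × Y} (hd1 : gamX p.1 * epsX p.1 + epsY p.2 ≠ 0)
    (hd2 : c * (gamX p.1 * epsX p.1) + epsY p.2 ≠ 0) :
    prodE eX eY epsX gamX epsY c' (prodE eX eY epsX gamX epsY c p)
      = prodE eX eY epsX gamX epsY (c * c') p := by
  rw [prodE_eq_prodFactor eX eY epsX gamX epsY c',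
    gam_mul_eps_prodE_fst hXeps hXgam hd1 hd2, epsY_prodE_snd hYeps hc hd1 hd2,
    prodE_eq_prodFactor eX eY epsX gamX epsY c, hXmul, hYmul,
    prodFactor_rescale_mul hc hd1 hd2, div_prodFactor_rescale_mul_div hc hd1 hd2,
    prodE_eq_prodFactor]

end Product

theorem stmt15_general {X Y : Type*} (eX : ℂ → X → X) (eY : ℂ → Y → Y)
    (epsX gamX : X → ℂ) (epsY gamY : Y → ℂ)
    (hXeps : ∀ c : ℂ, c ≠ 0 → ∀ x, epsX (eX c x) = c⁻¹ * epsX x)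
    (hXgam : ∀ c : ℂ, c ≠ 0 → ∀ x, gamX (eX c x) = c ^ 2 * gamX x)
    (hYeps : ∀ c : ℂ, c ≠ 0 → ∀ y, epsY (eY c y) = c⁻¹ * epsY y)
    (hYgam : ∀ c : ℂ, c ≠ 0 → ∀ y, gamY (eY c y) = c ^ 2 * gamY y)
    (hXmul : ∀ c c' : ℂ, ∀ x, eX c (eX c' x) = eX (c * c') x)
    (hYmul : ∀ c c' : ℂ, ∀ y, eY c (eY c' y) = eY (c * c') y)
    (c c' : ℂ) (hc : c ≠ 0) (p : X × Y)
    (h1 : epsX p.1 ≠ 0) (h2 : gamX p.1 ≠ 0)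
    (hd1 : gamX p.1 * epsX p.1 + epsY p.2 ≠ 0)
    (hd2 : c * (gamX p.1 * epsX p.1) + epsY p.2 ≠ 0) :
    prodEps epsX gamX epsY (prodE eX eY epsX gamX epsY c p)
        = c⁻¹ * prodEps epsX gamX epsY p ∧
    prodGam gamX gamY (prodE eX eY epsX gamX epsY c p)
        = c ^ 2 * prodGam gamX gamY p ∧
    prodE eX eY epsX gamX epsY c' (prodE eX eY epsX gamX epsY c p)
        = prodE eX eY epsX gamX epsY (c * c') p :=
  ⟨prodEps_prodE hXeps hXgam hYeps hc h1 h2 hd1 hd2, prodGam_prodE hXgam hYgam hc hd1 hd2,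
    prodE_prodE hXeps hXgam hYeps hXmul hYmul hc c' hd1 hd2⟩

theorem stmt15 {X Y : Type*} (eX : ℂ → X → X) (eY : ℂ → Y → Y)
    (epsX gamX : X → ℂ) (epsY gamY : Y → ℂ)
    (hXeps : ∀ c : ℂ, c ≠ 0 → ∀ x, epsX (eX c x) = c⁻¹ * epsX x)
    (hXgam : ∀ c : ℂ, c ≠ 0 → ∀ x, gamX (eX c x) = c ^ 2 * gamX x)
    (hXphi : ∀ c : ℂ, c ≠ 0 → ∀ x, gamX (eX c x) * epsX (eX c x) = c * (gamX x * epsX x))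
    (hYeps : ∀ c : ℂ, c ≠ 0 → ∀ y, epsY (eY c y) = c⁻¹ * epsY y)
    (hYgam : ∀ c : ℂ, c ≠ 0 → ∀ y, gamY (eY c y) = c ^ 2 * gamY y)
    (hYphi : ∀ c : ℂ, c ≠ 0 → ∀ y, gamY (eY c y) * epsY (eY c y) = c * (gamY y * epsY y))
    (hXmul : ∀ c c' : ℂ, ∀ x, eX c (eX c' x) = eX (c * c') x)
    (hYmul : ∀ c c' : ℂ, ∀ y, eY c (eY c' y) = eY (c * c') y)
    (c c' : ℂ) (hc : c ≠ 0) (hc' : c' ≠ 0) (p : X × Y)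
    (h1 : epsX p.1 ≠ 0) (h2 : gamX p.1 ≠ 0) (h3 : epsY p.2 ≠ 0) (h4 : gamY p.2 ≠ 0)
    (hd1 : gamX p.1 * epsX p.1 + epsY p.2 ≠ 0)
    (hd2 : c * (gamX p.1 * epsX p.1) + epsY p.2 ≠ 0)
    (hd5 : (c * c') * (gamX p.1 * epsX p.1) + epsY p.2 ≠ 0)
    (hd3 : gamX (prodE eX eY epsX gamX epsY c p).1 * epsX (prodE eX eY epsX gamX epsY c p).1
            + epsY (prodE eX eY epsX gamX epsY c p).2 ≠ 0)
    (hd4 : c' * (gamX (prodE eX eY epsX gamX epsY c p).1 * epsX (prodE eX eY epsX gamX epsY c p).1)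
            + epsY (prodE eX eY epsX gamX epsY c p).2 ≠ 0) :
    prodEps epsX gamX epsY (prodE eX eY epsX gamX epsY c p)
        = c⁻¹ * prodEps epsX gamX epsY p ∧
    prodGam gamX gamY (prodE eX eY epsX gamX epsY c p)
        = c ^ 2 * prodGam gamX gamY p ∧
    prodE eX eY epsX gamX epsY c' (prodE eX eY epsX gamX epsY c p)
        = prodE eX eY epsX gamX epsY (c * c') p :=
  stmt15_general eX eY epsX gamX epsY gamY hXeps hXgam hYeps hYgam hXmul hYmul c c' hc p h1 h2 hd1
    hd2
end

section
/- In the product geometric crystal, ε₀ satisfies the scaling law inductively: if ε₀(e₀^c(x′)) = c^{−1} ε₀(x′) and φ₀(e₀^c(x′)) = c φ₀(x′) hold for x′ = (x₁,…,x_{k−1}), and the same laws hold on the k-th factor, then with the product formulas c₁ = (cφ₀(x′)+ε₀(x_k))/(φ₀(x′)+ε₀(x_k)), c₂ = c/c₁, one has ε₀(e₀^{c₁}(x′), e₀^{c₂}(x_k)) = c^{−1} (ε₀(x′) + ε₀(x′)ε₀(x_k)/φ₀(x′)). -/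
/- The rescaled second summand is `ε ε' / (c c₁ φ)`, so the left side equals
`ε (c φ + ε') / (c c₁ φ)`, and the choice of `c₁` turns `c φ + ε'` into `c₁ (φ + ε')`. -/
theorem product_eps_scaling {K : Type*} [Field K] {c c₁ ε φ ε' : K}
    (hc : c ≠ 0) (hc₁ : c₁ ≠ 0) (hφ : φ ≠ 0) (h : c₁ * (φ + ε') = c * φ + ε') :
    c₁⁻¹ * ε + c₁⁻¹ * ε * ((c / c₁)⁻¹ * ε') / (c₁ * φ) = c⁻¹ * (ε + ε * ε' / φ) := by
  field_simp
  linear_combination (-ε) * h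

/-- Inductive scaling law for `ε₀` on a product: from the single-factor laws
`ε₀(e₀^c x′) = c⁻¹ ε₀(x′)`, `φ₀(e₀^c x′) = c φ₀(x′)` and
`ε₀(e₀^c x_k) = c⁻¹ ε₀(x_k)`, with `c₁ = (c φ₀(x′)+ε₀(x_k))/(φ₀(x′)+ε₀(x_k))`
and `c₂ = c/c₁`, one gets
`ε₀(e₀^{c₁} x′, e₀^{c₂} x_k) = c⁻¹ (ε₀(x′) + ε₀(x′)ε₀(x_k)/φ₀(x′))`. -/
theorem stmt16 {A B : Type*} (eA : ℂ → A → A) (eB : ℂ → B → B)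
    (epsA phiA : A → ℂ) (epsB : B → ℂ)
    (hAeps : ∀ c : ℂ, c ≠ 0 → ∀ x, epsA (eA c x) = c⁻¹ * epsA x)
    (hAphi : ∀ c : ℂ, c ≠ 0 → ∀ x, phiA (eA c x) = c * phiA x)
    (hBeps : ∀ c : ℂ, c ≠ 0 → ∀ y, epsB (eB c y) = c⁻¹ * epsB y)
    (c : ℂ) (hc : c ≠ 0) (x' : A) (xk : B)
    (hphi : phiA x' ≠ 0)
    (hden : phiA x' + epsB xk ≠ 0)
    (hnum : c * phiA x' + epsB xk ≠ 0) :
    epsA (eA ((c * phiA x' + epsB xk) / (phiA x' + epsB xk)) x')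
      + epsA (eA ((c * phiA x' + epsB xk) / (phiA x' + epsB xk)) x')
        * epsB (eB (c / ((c * phiA x' + epsB xk) / (phiA x' + epsB xk))) xk)
        / phiA (eA ((c * phiA x' + epsB xk) / (phiA x' + epsB xk)) x')
    = c⁻¹ * (epsA x' + epsA x' * epsB xk / phiA x') := by
  set c₁ := (c * phiA x' + epsB xk) / (phiA x' + epsB xk)
  have hc₁ : c₁ ≠ 0 := div_ne_zero hnum hden
  rw [hAeps c₁ hc₁, hAphi c₁ hc₁, hBeps (c / c₁) (div_ne_zero hc hc₁)]
  exact product_eps_scaling hc hc₁ hphi (div_mul_cancel₀ _ hden)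
end
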